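/- arXiv:2509.09135 — 2 statements merged into one kernel-verified Lean document; each statement's English description precedes it below -/
import Mathlib

section
/- Let V : ℝⁿ → ℝ be C¹, f : ℝⁿ → ℝⁿ continuous, r : ℝⁿ → ℝ continuous, ρ > 0, and suppose x : [0,∞) → ℝⁿ solves ẋ = f(x) with the identity -ρV(y) + ∇V(y)·f(y) + r(y) = 0 holding for all y ∈ ℝⁿ. If additionally e^{-ρt}V(x(t)) → 0 as t → ∞, then V(x(0)) = ∫₀^∞ e^{-ρτ} r(x(τ)) dτ. -/
open scoped RealInnerProductSpace
open Filter Set Topology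

/-! Along the trajectory the HJB identity says exactly that
`d/dt (e^{-ρt} V(x t)) = -e^{-ρt} r(x t)`. Integrating over `[0, T]` gives
`∫₀ᵀ e^{-ρτ} r(x τ) dτ = V(x 0) - e^{-ρT} V(x T)`, and transversality kills the last term. -/

theorem tendsto_intervalIntegral_of_hasDerivAt_of_tendsto {E : Type*} [NormedAddCommGroup E]
    [NormedSpace ℝ E] [CompleteSpace E] {F g : ℝ → E} {a : ℝ} {L : E}
    (hF : ∀ t ≥ a, HasDerivAt F (g t) t) (hg : ContinuousOn g (Ici a))
    (hFL : Tendsto F atTop (𝓝 L)) :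
    Tendsto (fun T => ∫ τ in a..T, g τ) atTop (𝓝 (L - F a)) := by
  refine (hFL.sub_const (F a)).congr' ?_
  filter_upwards [eventually_ge_atTop a] with T hT
  have hIcc : uIcc a T = Icc a T := uIcc_of_le hT
  refine (intervalIntegral.integral_eq_sub_of_hasDerivAt (fun t ht => hF t ?_) ?_).symm
  · rw [hIcc] at ht
    exact ht.1
  · exact (hg.mono (hIcc ▸ Icc_subset_Ici_self)).intervalIntegrable

theorem HasGradientAt.hasDerivAt_exp_neg_mul_mul_comp {E : Type*} [NormedAddCommGroup E]
    [InnerProductSpace ℝ E] [CompleteSpace E] {V : E → ℝ} {x : ℝ → E} {v w : E} {ρ t : ℝ}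
    (hV : HasGradientAt V w (x t)) (hx : HasDerivAt x v t) :
    HasDerivAt (fun s => Real.exp (-ρ * s) * V (x s))
      (Real.exp (-ρ * t) * (-ρ * V (x t) + ⟪w, v⟫)) t := by
  have hVx : HasDerivAt (fun s => V (x s)) ⟪w, v⟫ t := by
    simpa [Function.comp_def] using hV.hasFDerivAt.comp_hasDerivAt t hx
  have hexp : HasDerivAt (fun s => Real.exp (-ρ * s)) (Real.exp (-ρ * t) * -ρ) t := by
    simpa using ((hasDerivAt_id t).const_mul (-ρ)).exp
  exact (hexp.mul hVx).congr_deriv (by ring)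

theorem hjb_verification_equality_general (n : ℕ)
    (V : EuclideanSpace ℝ (Fin n) → ℝ) (hV : ContDiff ℝ 1 V)
    (f : EuclideanSpace ℝ (Fin n) → EuclideanSpace ℝ (Fin n))
    (r : EuclideanSpace ℝ (Fin n) → ℝ) (hr : Continuous r)
    (ρ : ℝ)
    (x : ℝ → EuclideanSpace ℝ (Fin n)) (hx : ∀ t ≥ (0:ℝ), HasDerivAt x (f (x t)) t)
    (hHJB : ∀ y, -ρ * V y + ⟪gradient V y, f y⟫ + r y = 0)
    (htrans : Filter.Tendsto (fun t => Real.exp (-ρ * t) * V (x t))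
      Filter.atTop (nhds 0)) :
    Filter.Tendsto (fun T => ∫ τ in (0:ℝ)..T, Real.exp (-ρ * τ) * r (x τ))
      Filter.atTop (nhds (V (x 0))) := by
  have hderiv : ∀ t ≥ (0:ℝ), HasDerivAt (fun s => -(Real.exp (-ρ * s) * V (x s)))
      (Real.exp (-ρ * t) * r (x t)) t := by
    intro t ht
    have hgrad := ((hV.differentiable one_ne_zero) (x t)).hasGradientAt
    refine (hgrad.hasDerivAt_exp_neg_mul_mul_comp (hx t ht)).neg.congr_deriv ?_
    linear_combination -Real.exp (-ρ * t) * hHJB (x t)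
  have hcont : ContinuousOn (fun τ => Real.exp (-ρ * τ) * r (x τ)) (Ici 0) := fun τ hτ =>
    ((by fun_prop : Continuous fun τ : ℝ => Real.exp (-ρ * τ)).continuousAt.mul
      (hr.continuousAt.comp (hx τ hτ).continuousAt)).continuousWithinAt
  simpa using tendsto_intervalIntegral_of_hasDerivAt_of_tendsto hderiv hcont htrans.neg

theorem hjb_verification_equality (n : ℕ)
    (V : EuclideanSpace ℝ (Fin n) → ℝ) (hV : ContDiff ℝ 1 V)
    (f : EuclideanSpace ℝ (Fin n) → EuclideanSpace ℝ (Fin n)) (hf : Continuous f)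
    (r : EuclideanSpace ℝ (Fin n) → ℝ) (hr : Continuous r)
    (ρ : ℝ) (hρ : 0 < ρ)
    (x : ℝ → EuclideanSpace ℝ (Fin n)) (hx : ∀ t ≥ (0:ℝ), HasDerivAt x (f (x t)) t)
    (hHJB : ∀ y, -ρ * V y + ⟪gradient V y, f y⟫ + r y = 0)
    (htrans : Filter.Tendsto (fun t => Real.exp (-ρ * t) * V (x t))
      Filter.atTop (nhds 0)) :
    Filter.Tendsto (fun T => ∫ τ in (0:ℝ)..T, Real.exp (-ρ * τ) * r (x τ))
      Filter.atTop (nhds (V (x 0))) :=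
  hjb_verification_equality_general n V hV f r hr ρ x hx hHJB htrans
end

section
/- Let V : ℝⁿ → ℝ be C¹, let f : ℝⁿ × U → ℝⁿ and r : ℝⁿ × U → ℝ be continuous, and ρ > 0. Suppose -ρV(y) + sup_{u ∈ U}[∇V(y)·f(y,u) + r(y,u)] = 0 for all y, and that for any admissible control u(·) with trajectory x(·) solving ẋ = f(x,u), e^{-ρt}V(x(t)) → 0 as t → ∞. Then for any admissible control, V(x(0)) ≥ ∫₀^∞ e^{-ρτ} r(x(τ),u(τ)) dτ. -/
open scoped RealInnerProductSpace
open MeasureTheory Set Filter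

/-!
Along an admissible trajectory, `t ↦ e^{-ρt} V(x(t))` has derivative
`e^{-ρt} (-ρ V + ⟪∇V, f⟫)`, which the HJB equation bounds above by `-e^{-ρt} r`. Integrating this
differential inequality over `[0, T]` gives `∫₀ᵀ e^{-ρτ} r ≤ V(x(0)) - e^{-ρT} V(x(T))`, and the
transversality condition kills the last term as `T → ∞`.
-/

theorem IsCompact.le_sSup_image {Y : Type*} [TopologicalSpace Y] {U : Set Y} {φ : Y → ℝ}
    (hU : IsCompact U) (hφ : ContinuousOn φ U) {w : Y} (hw : w ∈ U) :
    φ w ≤ sSup (φ '' U) :=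
  le_csSup (hU.image_of_continuousOn hφ).bddAbove (mem_image_of_mem φ hw)

theorem integrableOn_Icc_comp_prodMk_of_isCompact {X Y : Type*}
    [TopologicalSpace X] [MeasurableSpace X] [BorelSpace X] [SecondCountableTopology X]
    [TopologicalSpace Y] [MeasurableSpace Y] [OpensMeasurableSpace Y]
    {ψ : X × Y → ℝ} (hψ : Continuous ψ) {x : ℝ → X} {u : ℝ → Y} {U : Set Y} {a b : ℝ}
    (hx : ContinuousOn x (Icc a b)) (hu : Measurable u) (hU : IsCompact U)
    (huU : MapsTo u (Icc a b) U) :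
    IntegrableOn (fun t => ψ (x t, u t)) (Icc a b) := by
  obtain ⟨C, hC⟩ := ((isCompact_Icc.image_of_continuousOn hx).prod hU).exists_bound_of_continuousOn
    hψ.continuousOn
  have hmeas : AEStronglyMeasurable (fun t => ψ (x t, u t)) (volume.restrict (Icc a b)) :=
    (hψ.measurable.comp_aemeasurable
      ((hx.aemeasurable measurableSet_Icc).prodMk hu.aemeasurable)).aestronglyMeasurable
  refine Integrable.of_bound hmeas C ?_
  filter_upwards [ae_restrict_mem measurableSet_Icc] with t ht
  exact hC _ ⟨mem_image_of_mem x ht, huU ht⟩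

theorem hasDerivAt_exp_mul_comp {E : Type*} [NormedAddCommGroup E] [InnerProductSpace ℝ E]
    [CompleteSpace E] {V : E → ℝ} {x : ℝ → E} {v : E} {ρ t : ℝ}
    (hV : DifferentiableAt ℝ V (x t)) (hx : HasDerivAt x v t) :
    HasDerivAt (fun s => Real.exp (-ρ * s) * V (x s))
      (Real.exp (-ρ * t) * (-ρ * V (x t) + ⟪gradient V (x t), v⟫)) t := by
  have hexp : HasDerivAt (fun s => Real.exp (-ρ * s)) (Real.exp (-ρ * t) * -ρ) t := by
    simpa using ((hasDerivAt_id t).const_mul (-ρ)).exp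
  have hVx : HasDerivAt (fun s => V (x s)) ⟪gradient V (x t), v⟫ t := by
    rw [inner_gradient_left]
    exact hV.hasFDerivAt.comp_hasDerivAt t hx
  exact (hexp.mul hVx).congr_deriv (by ring)

theorem integral_exp_mul_le_sub_of_hjb {E : Type*} [NormedAddCommGroup E]
    [InnerProductSpace ℝ E] [CompleteSpace E] {V : E → ℝ} (hV : Differentiable ℝ V)
    {x v : ℝ → E} {P : ℝ → ℝ} {ρ T : ℝ} (hT : 0 ≤ T)
    (hx : ∀ t ∈ Icc 0 T, HasDerivAt x (v t) t) (hP : IntegrableOn P (Icc 0 T))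
    (hHJB : ∀ t ∈ Icc 0 T, ⟪gradient V (x t), v t⟫ + P t ≤ ρ * V (x t)) :
    ∫ t in (0:ℝ)..T, Real.exp (-ρ * t) * P t ≤ V (x 0) - Real.exp (-ρ * T) * V (x T) := by
  have hderiv : ∀ t ∈ Icc 0 T, HasDerivAt (fun s => -(Real.exp (-ρ * s) * V (x s)))
      (-(Real.exp (-ρ * t) * (-ρ * V (x t) + ⟪gradient V (x t), v t⟫))) t :=
    fun t ht => (hasDerivAt_exp_mul_comp (hV _) (hx t ht)).neg
  have hle := intervalIntegral.integral_le_sub_of_hasDeriv_right_of_le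
    (φ := fun t => Real.exp (-ρ * t) * P t) hT
    (fun t ht => (hderiv t ht).continuousAt.continuousWithinAt)
    (fun t ht => (hderiv t (Ioo_subset_Icc_self ht)).hasDerivWithinAt)
    (hP.continuousOn_mul (by fun_prop) isCompact_Icc)
    (fun t ht => by
      have := hHJB t (Ioo_subset_Icc_self ht)
      nlinarith [Real.exp_pos (-ρ * t)])
  simpa [sub_eq_neg_add, add_comm] using hle

theorem hjb_verification_inequality_general (n m : ℕ)
    (U : Set (EuclideanSpace ℝ (Fin m))) (hU : IsCompact U)
    (V : EuclideanSpace ℝ (Fin n) → ℝ) (hV : ContDiff ℝ 1 V)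
    (f : EuclideanSpace ℝ (Fin n) → EuclideanSpace ℝ (Fin m) → EuclideanSpace ℝ (Fin n))
    (hf : Continuous fun p : EuclideanSpace ℝ (Fin n) × EuclideanSpace ℝ (Fin m) => f p.1 p.2)
    (r : EuclideanSpace ℝ (Fin n) → EuclideanSpace ℝ (Fin m) → ℝ)
    (hr : Continuous fun p : EuclideanSpace ℝ (Fin n) × EuclideanSpace ℝ (Fin m) => r p.1 p.2)
    (ρ : ℝ)
    (hHJB : ∀ y, -ρ * V y +
      sSup ((fun u => ⟪gradient V y, f y u⟫ + r y u) '' U) = 0)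
    (u : ℝ → EuclideanSpace ℝ (Fin m)) (hu_meas : Measurable u)
    (hu_mem : ∀ t ≥ (0:ℝ), u t ∈ U)
    (x : ℝ → EuclideanSpace ℝ (Fin n)) (hx : ∀ t ≥ (0:ℝ), HasDerivAt x (f (x t) (u t)) t)
    (htrans : Filter.Tendsto (fun t => Real.exp (-ρ * t) * V (x t))
      Filter.atTop (nhds 0)) :
    ∀ L : ℝ, Filter.Tendsto (fun T => ∫ τ in (0:ℝ)..T, Real.exp (-ρ * τ) * r (x τ) (u τ))
      Filter.atTop (nhds L) → L ≤ V (x 0) := by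
  intro L hL
  have hpointwise : ∀ t ≥ (0:ℝ), ⟪gradient V (x t), f (x t) (u t)⟫ + r (x t) (u t) ≤ ρ * V (x t) :=
    fun t ht => by
      have := hU.le_sSup_image (φ := fun w => ⟪gradient V (x t), f (x t) w⟫ + r (x t) w)
        (by fun_prop) (hu_mem t ht)
      linarith [hHJB (x t)]
  have hbound : ∀ T ≥ (0:ℝ), ∫ τ in (0:ℝ)..T, Real.exp (-ρ * τ) * r (x τ) (u τ)
      ≤ V (x 0) - Real.exp (-ρ * T) * V (x T) := fun T hT =>
    integral_exp_mul_le_sub_of_hjb (hV.differentiable one_ne_zero) hT (fun t ht => hx t ht.1)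
      (integrableOn_Icc_comp_prodMk_of_isCompact hr
        (fun t ht => (hx t ht.1).continuousAt.continuousWithinAt) hu_meas hU
        (fun t ht => hu_mem t ht.1))
      (fun t ht => hpointwise t ht.1)
  exact le_of_tendsto_of_tendsto hL (by simpa using tendsto_const_nhds.sub htrans)
    (eventually_ge_atTop 0 |>.mono hbound)

theorem hjb_verification_inequality (n m : ℕ)
    (U : Set (EuclideanSpace ℝ (Fin m))) (hU : IsCompact U) (hUne : U.Nonempty)
    (V : EuclideanSpace ℝ (Fin n) → ℝ) (hV : ContDiff ℝ 1 V)
    (f : EuclideanSpace ℝ (Fin n) → EuclideanSpace ℝ (Fin m) → EuclideanSpace ℝ (Fin n))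
    (hf : Continuous fun p : EuclideanSpace ℝ (Fin n) × EuclideanSpace ℝ (Fin m) => f p.1 p.2)
    (r : EuclideanSpace ℝ (Fin n) → EuclideanSpace ℝ (Fin m) → ℝ)
    (hr : Continuous fun p : EuclideanSpace ℝ (Fin n) × EuclideanSpace ℝ (Fin m) => r p.1 p.2)
    (ρ : ℝ) (hρ : 0 < ρ)
    (hHJB : ∀ y, -ρ * V y +
      sSup ((fun u => ⟪gradient V y, f y u⟫ + r y u) '' U) = 0)
    (u : ℝ → EuclideanSpace ℝ (Fin m)) (hu_meas : Measurable u)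
    (hu_mem : ∀ t ≥ (0:ℝ), u t ∈ U)
    (x : ℝ → EuclideanSpace ℝ (Fin n)) (hx : ∀ t ≥ (0:ℝ), HasDerivAt x (f (x t) (u t)) t)
    (htrans : Filter.Tendsto (fun t => Real.exp (-ρ * t) * V (x t))
      Filter.atTop (nhds 0)) :
    ∀ L : ℝ, Filter.Tendsto (fun T => ∫ τ in (0:ℝ)..T, Real.exp (-ρ * τ) * r (x τ) (u τ))
      Filter.atTop (nhds L) → L ≤ V (x 0) :=
  hjb_verification_inequality_general n m U hU V hV f hf r hr ρ hHJB u hu_meas hu_mem x hx htrans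
end
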